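/- Consider the preconditioned Fletcher–Reeves nonlinear CG iteration for a differentiable E : ℝⁿ → ℝ with symmetric positive definite preconditioner M, with nonzero gradients g^(k) = ∇E(f^(k)) at every iterate. Assume E is bounded below on ℝⁿ, ∇E is Lipschitz continuous on ℝⁿ, and every step length α_k satisfies the strong Wolfe conditions with constants 0 < c₁ < c₂ < 1/2. Then the series Σ_{k=0}^{∞} cos²θ_M^(k) · ‖g^(k)‖²_{M⁻¹} converges, where cos θ_M^(k) = −(g^(k)ᵀ p^(k)) / (‖g^(k)‖_{M⁻¹} ‖p^(k)‖_M); equivalently, Σ_{k=0}^{∞} (g^(k)ᵀ p^(k))² / (p^(k)ᵀ M p^(k)) < ∞. -/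

import Mathlib

/-!
Writing `γₖ = ‖g⁽ᵏ⁾‖²_{M⁻¹}` and `δₖ = g⁽ᵏ⁾ᵀp⁽ᵏ⁾`, the Fletcher–Reeves recursion gives
`δₖ₊₁/γₖ₊₁ + 1 = g⁽ᵏ⁺¹⁾ᵀp⁽ᵏ⁾/γₖ`, so by the strong Wolfe curvature condition the ratio
`rₖ = δₖ/γₖ` satisfies `r₀ = -1` and `|rₖ₊₁ + 1| ≤ c₂ |rₖ|`. Hence `rₖ` stays within
`c₂/(1 - c₂) < 1` of `-1` (Al-Baali), and every `p⁽ᵏ⁾` is a descent direction.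

Zoutendijk's argument then applies: the curvature condition and the Lipschitz bound on `∇E`
bound the step length below by a multiple of `|δₖ|/‖p⁽ᵏ⁾‖²`, the Armijo condition turns this
into a decrease of `E` by a multiple of `δₖ²/‖p⁽ᵏ⁾‖²`, and these decreases are summable
because `E` is bounded below. Since `cos²θ_M⁽ᵏ⁾ γₖ = δₖ²/‖p⁽ᵏ⁾‖²_M` and `‖·‖_M` dominates a
multiple of the norm, the claim follows.
-/

open Matrix

section Norms

variable {ι : Type*} [Fintype ι]

lemma dotProduct_le_card_mul_norm_mul_norm (x y : ι → ℝ) :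
    x ⬝ᵥ y ≤ Fintype.card ι * ‖x‖ * ‖y‖ := by
  calc x ⬝ᵥ y ≤ ∑ _i : ι, ‖x‖ * ‖y‖ := Finset.sum_le_sum fun i _ => ?_
    _ = Fintype.card ι * ‖x‖ * ‖y‖ := by simp [mul_assoc]
  calc x i * y i ≤ ‖x i‖ * ‖y i‖ := by rw [← norm_mul]; exact Real.le_norm_self _
    _ ≤ ‖x‖ * ‖y‖ := by gcongr <;> exact norm_le_pi_norm _ i

lemma Matrix.PosDef.exists_pos_mul_sq_norm_le_dotProduct_mulVec {M : Matrix ι ι ℝ}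
    (hM : M.PosDef) : ∃ c > 0, ∀ x : ι → ℝ, c * ‖x‖ ^ 2 ≤ x ⬝ᵥ M *ᵥ x := by
  cases isEmpty_or_nonempty ι
  · exact ⟨1, one_pos, fun x => by simp [Subsingleton.elim x 0]⟩
  have hq : Continuous fun x : ι → ℝ => x ⬝ᵥ M *ᵥ x :=
    continuous_id.dotProduct (continuous_const.matrix_mulVec continuous_id)
  obtain ⟨x₀, hx₀, hmin⟩ := (isCompact_sphere (0 : ι → ℝ) 1).exists_isMinOn
    (NormedSpace.sphere_nonempty.2 zero_le_one) hq.continuousOn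
  have hx₀ : x₀ ≠ 0 := ne_zero_of_mem_unit_sphere ⟨x₀, hx₀⟩
  refine ⟨_, by simpa using hM.dotProduct_mulVec_pos hx₀, fun x => ?_⟩
  rcases eq_or_ne x 0 with rfl | hx
  · simp
  have hmin_x : x₀ ⬝ᵥ M *ᵥ x₀ ≤ (‖x‖⁻¹ • x) ⬝ᵥ M *ᵥ (‖x‖⁻¹ • x) :=
    hmin (show ‖x‖⁻¹ • x ∈ Metric.sphere 0 1 by simp [norm_smul, hx])
  simp only [mulVec_smul, dotProduct_smul, smul_dotProduct, smul_eq_mul] at hmin_x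
  have hx' : 0 < ‖x‖ := norm_pos_iff.2 hx
  calc _ ≤ ‖x‖⁻¹ * (‖x‖⁻¹ * (x ⬝ᵥ M *ᵥ x)) * ‖x‖ ^ 2 := by gcongr
    _ = x ⬝ᵥ M *ᵥ x := by field_simp

lemma Matrix.PosDef.summable_sq_div_dotProduct_mulVec {M : Matrix ι ι ℝ} (hM : M.PosDef)
    {a : ℕ → ℝ} {p : ℕ → ι → ℝ} (h : Summable fun k => a k ^ 2 / ‖p k‖ ^ 2) :
    Summable fun k => a k ^ 2 / (p k ⬝ᵥ M *ᵥ p k) := by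
  obtain ⟨c, hc, hcM⟩ := hM.exists_pos_mul_sq_norm_le_dotProduct_mulVec
  refine (h.mul_left c⁻¹).of_nonneg_of_le (fun k => ?_) fun k => ?_
  · exact div_nonneg (sq_nonneg _) (by simpa using hM.posSemidef.dotProduct_mulVec_nonneg (p k))
  rcases eq_or_ne (p k) 0 with hp | hp
  · simp [hp]
  calc a k ^ 2 / (p k ⬝ᵥ M *ᵥ p k) ≤ a k ^ 2 / (c * ‖p k‖ ^ 2) :=
        div_le_div_of_nonneg_left (sq_nonneg _) (by positivity) (hcM _)
    _ = c⁻¹ * (a k ^ 2 / ‖p k‖ ^ 2) := by field_simp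

end Norms

lemma abs_add_one_le_of_abs_succ_add_one_le {c : ℝ} (hc₀ : 0 ≤ c) (hc₁ : c < 1) {r : ℕ → ℝ}
    (h₀ : r 0 = -1) (hstep : ∀ k, |r (k + 1) + 1| ≤ c * |r k|) (k : ℕ) :
    |r k + 1| ≤ c / (1 - c) := by
  have h1c : 0 < 1 - c := by linarith
  induction k with
  | zero => simp only [h₀, neg_add_cancel, abs_zero]; positivity
  | succ k ih =>
    have hr : |r k| ≤ 1 / (1 - c) :=
      calc |r k| ≤ |r k + 1| + |(-1 : ℝ)| := by simpa using abs_add_le (r k + 1) (-1)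
        _ ≤ c / (1 - c) + 1 := by rw [abs_neg, abs_one]; linarith
        _ = 1 / (1 - c) := by field_simp; ring
    calc |r (k + 1) + 1| ≤ c * |r k| := hstep k
      _ ≤ c * (1 / (1 - c)) := by gcongr
      _ = c / (1 - c) := by ring

theorem fletcherReeves_dotProduct_neg {ι : Type*} [Fintype ι] {g d p : ℕ → ι → ℝ} {c : ℝ}
    (hc₀ : 0 ≤ c) (hc : c < 1 / 2)
    (hγ : ∀ k, 0 < g k ⬝ᵥ d k) (hp₀ : p 0 = -d 0)
    (hp : ∀ k, p (k + 1) = -d (k + 1) + ((g (k + 1) ⬝ᵥ d (k + 1)) / (g k ⬝ᵥ d k)) • p k)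
    (hcurv : ∀ k, |g (k + 1) ⬝ᵥ p k| ≤ c * |g k ⬝ᵥ p k|) (k : ℕ) :
    g k ⬝ᵥ p k < 0 := by
  set r : ℕ → ℝ := fun k => (g k ⬝ᵥ p k) / (g k ⬝ᵥ d k)
  have hr₀ : r 0 = -1 := by simp [r, hp₀, (hγ 0).ne']
  have hstep : ∀ k, |r (k + 1) + 1| ≤ c * |r k| := fun k => by
    have hr : r (k + 1) + 1 = (g (k + 1) ⬝ᵥ p k) / (g k ⬝ᵥ d k) := by
      simp only [r, hp k, dotProduct_add, dotProduct_neg, dotProduct_smul, smul_eq_mul]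
      field_simp [(hγ k).ne', (hγ (k + 1)).ne']
      ring
    rw [hr, abs_div, abs_div, abs_of_pos (hγ k), ← mul_div_assoc]
    exact div_le_div_of_nonneg_right (hcurv k) (hγ k).le
  have hrk := (abs_le.1 (abs_add_one_le_of_abs_succ_add_one_le hc₀ (by linarith) hr₀ hstep k)).2
  have hrneg : r k < 0 := by
    have : c / (1 - c) < 1 := by rw [div_lt_one (by linarith)]; linarith
    linarith
  exact ((div_neg_iff.1 hrneg).resolve_left fun h => h.2.not_gt (hγ k)).1

lemma summable_of_add_le_of_bddBelow {e u : ℕ → ℝ} {B : ℝ} (hu : ∀ k, 0 ≤ u k)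
    (hdec : ∀ k, e (k + 1) + u k ≤ e k) (hB : ∀ k, B ≤ e k) : Summable u :=
  summable_of_sum_range_le hu fun K =>
    calc ∑ k ∈ Finset.range K, u k ≤ ∑ k ∈ Finset.range K, (e k - e (k + 1)) :=
          Finset.sum_le_sum fun k _ => by linarith [hdec k]
      _ = e 0 - e K := Finset.sum_range_sub' e K
      _ ≤ e 0 - B := by linarith [hB K]

section Zoutendijk

variable {ι : Type*} [Fintype ι] {E : (ι → ℝ) → ℝ} {G : (ι → ℝ) → ι → ℝ} {C c₁ c₂ : ℝ}

lemma wolfe_step_length_lower_bound (hLip : ∀ x y, ‖G y - G x‖ ≤ C * ‖y - x‖) {x p : ι → ℝ}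
    {α : ℝ} (hα : 0 ≤ α) (hcurv : c₂ * (G x ⬝ᵥ p) ≤ G (x + α • p) ⬝ᵥ p) :
    (1 - c₂) * -(G x ⬝ᵥ p) ≤ Fintype.card ι * C * ‖p‖ ^ 2 * α := by
  have hΔ : ‖G (x + α • p) - G x‖ ≤ C * (α * ‖p‖) := by
    simpa [norm_smul, abs_of_nonneg hα] using hLip x (x + α • p)
  calc (1 - c₂) * -(G x ⬝ᵥ p) ≤ (G (x + α • p) - G x) ⬝ᵥ p := by rw [sub_dotProduct]; linarith
    _ ≤ Fintype.card ι * ‖G (x + α • p) - G x‖ * ‖p‖ := dotProduct_le_card_mul_norm_mul_norm _ _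
    _ ≤ Fintype.card ι * (C * (α * ‖p‖)) * ‖p‖ := by gcongr
    _ = Fintype.card ι * C * ‖p‖ ^ 2 * α := by ring

lemma wolfe_sufficient_decrease (hC : 0 ≤ C) (hLip : ∀ x y, ‖G y - G x‖ ≤ C * ‖y - x‖)
    {x p : ι → ℝ} {α : ℝ} (hα : 0 ≤ α) (hc₁ : 0 ≤ c₁) (hdesc : G x ⬝ᵥ p ≤ 0)
    (harmijo : E (x + α • p) ≤ E x + c₁ * α * (G x ⬝ᵥ p))
    (hcurv : c₂ * (G x ⬝ᵥ p) ≤ G (x + α • p) ⬝ᵥ p) :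
    c₁ * (1 - c₂) * (G x ⬝ᵥ p) ^ 2 ≤ Fintype.card ι * C * ‖p‖ ^ 2 * (E x - E (x + α • p)) := by
  have hstep := wolfe_step_length_lower_bound hLip hα hcurv
  calc c₁ * (1 - c₂) * (G x ⬝ᵥ p) ^ 2 = c₁ * -(G x ⬝ᵥ p) * ((1 - c₂) * -(G x ⬝ᵥ p)) := by ring
    _ ≤ c₁ * -(G x ⬝ᵥ p) * (Fintype.card ι * C * ‖p‖ ^ 2 * α) := by
        gcongr
        exact mul_nonneg hc₁ (neg_nonneg.2 hdesc)
    _ = Fintype.card ι * C * ‖p‖ ^ 2 * (c₁ * α * -(G x ⬝ᵥ p)) := by ring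
    _ ≤ Fintype.card ι * C * ‖p‖ ^ 2 * (E x - E (x + α • p)) := by gcongr; linarith

theorem summable_sq_dotProduct_div_sq_norm_of_wolfe {B : ℝ} (hbdd : ∀ x, B ≤ E x) (hC : 0 < C)
    (hLip : ∀ x y, ‖G y - G x‖ ≤ C * ‖y - x‖) {f p : ℕ → ι → ℝ} {α : ℕ → ℝ}
    (hα : ∀ k, 0 ≤ α k) (hf : ∀ k, f (k + 1) = f k + α k • p k) (hc₁ : 0 < c₁) (hc₂ : c₂ < 1)
    (hdesc : ∀ k, G (f k) ⬝ᵥ p k < 0)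
    (harmijo : ∀ k, E (f k + α k • p k) ≤ E (f k) + c₁ * α k * (G (f k) ⬝ᵥ p k))
    (hcurv : ∀ k, c₂ * (G (f k) ⬝ᵥ p k) ≤ G (f k + α k • p k) ⬝ᵥ p k) :
    Summable fun k => (G (f k) ⬝ᵥ p k) ^ 2 / ‖p k‖ ^ 2 := by
  have hp : ∀ k, p k ≠ 0 := fun k hp => by simpa [hp] using hdesc k
  have : Nonempty ι := (Function.ne_iff.1 (hp 0)).nonempty
  set D := c₁ * (1 - c₂) / (Fintype.card ι * C)
  have hD : 0 < D := div_pos (mul_pos hc₁ (by linarith)) (by positivity)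
  refine (summable_mul_left_iff hD.ne').1 (summable_of_add_le_of_bddBelow (e := E ∘ f)
    (fun k => by positivity) (fun k => ?_) fun k => hbdd (f k))
  have hdecr :=
    wolfe_sufficient_decrease hC.le hLip (hα k) hc₁.le (hdesc k).le (harmijo k) (hcurv k)
  have hpk : 0 < ‖p k‖ := norm_pos_iff.2 (hp k)
  rw [← hf k] at hdecr
  simp only [Function.comp_apply, D]
  rw [div_mul_div_comm, ← le_sub_iff_add_le', div_le_iff₀ (by positivity)]
  linarith

end Zoutendijk

lemma div_sqrt_mul_sqrt_sq_mul (a : ℝ) {b c : ℝ} (hb : 0 < b) (hc : 0 ≤ c) :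
    (a / (√b * √c)) ^ 2 * b = a ^ 2 / c := by
  rw [div_pow, mul_pow, Real.sq_sqrt hb.le, Real.sq_sqrt hc]
  field_simp

theorem pcg_modified_zoutendijk_general
    (n : ℕ)
    (E : (Fin n → ℝ) → ℝ) (gradE : (Fin n → ℝ) → (Fin n → ℝ))
    (B : ℝ) (hbdd : ∀ x, B ≤ E x)
    (C : ℝ) (hC : 0 < C)
    (hLip : ∀ x y, ‖gradE y - gradE x‖ ≤ C * ‖y - x‖)
    (M : Matrix (Fin n) (Fin n) ℝ) (hM : M.PosDef)
    (f p : ℕ → (Fin n → ℝ)) (α : ℕ → ℝ)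
    (c₁ c₂ : ℝ) (hc₁ : 0 < c₁) (hc₁₂ : c₁ < c₂) (hc₂ : c₂ < 1 / 2)
    (hgne : ∀ k, gradE (f k) ≠ 0)
    (hα : ∀ k, 0 < α k)
    (hp0 : p 0 = -(M⁻¹.mulVec (gradE (f 0))))
    (hf : ∀ k, f (k + 1) = f k + α k • p k)
    (hpk : ∀ k, p (k + 1) =
      -(M⁻¹.mulVec (gradE (f (k + 1)))) +
        ((gradE (f (k + 1)) ⬝ᵥ M⁻¹.mulVec (gradE (f (k + 1)))) /
          (gradE (f k) ⬝ᵥ M⁻¹.mulVec (gradE (f k)))) • p k)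
    (hWolfe1 : ∀ k, E (f k + α k • p k) ≤ E (f k) + c₁ * α k * (gradE (f k) ⬝ᵥ p k))
    (hWolfe2 : ∀ k, |gradE (f k + α k • p k) ⬝ᵥ p k| ≤ c₂ * |gradE (f k) ⬝ᵥ p k|) :
    Summable (fun k : ℕ =>
      ((-(gradE (f k) ⬝ᵥ p k)) /
          (Real.sqrt (gradE (f k) ⬝ᵥ M⁻¹.mulVec (gradE (f k))) *
            Real.sqrt (p k ⬝ᵥ M.mulVec (p k)))) ^ 2 *
        (gradE (f k) ⬝ᵥ M⁻¹.mulVec (gradE (f k)))) := by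
  have hγ : ∀ k, 0 < gradE (f k) ⬝ᵥ M⁻¹ *ᵥ gradE (f k) := fun k => by
    simpa using hM.inv.dotProduct_mulVec_pos (hgne k)
  have hdesc : ∀ k, gradE (f k) ⬝ᵥ p k < 0 :=
    fletcherReeves_dotProduct_neg (g := fun k => gradE (f k)) (d := fun k => M⁻¹ *ᵥ gradE (f k))
      (hc₁.trans hc₁₂).le hc₂ hγ hp0 hpk fun k => hf k ▸ hWolfe2 k
  have hcurv : ∀ k, c₂ * (gradE (f k) ⬝ᵥ p k) ≤ gradE (f k + α k • p k) ⬝ᵥ p k := fun k => by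
    have h := hWolfe2 k
    rw [abs_of_neg (hdesc k)] at h
    linarith [neg_abs_le (gradE (f k + α k • p k) ⬝ᵥ p k)]
  have hzout := summable_sq_dotProduct_div_sq_norm_of_wolfe hbdd hC hLip (fun k => (hα k).le) hf
    hc₁ (by linarith) hdesc hWolfe1 hcurv
  refine (hM.summable_sq_div_dotProduct_mulVec hzout).congr fun k => ?_
  have hpMp : 0 ≤ p k ⬝ᵥ M *ᵥ p k := by simpa using hM.posSemidef.dotProduct_mulVec_nonneg (p k)
  rw [div_sqrt_mul_sqrt_sq_mul _ (hγ k) hpMp, neg_sq]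

/-- Lemma 5.5 (modified Zoutendijk's condition): for the preconditioned
Fletcher–Reeves nonlinear CG iteration with `E` bounded below, `∇E` Lipschitz,
and strong Wolfe step lengths with `0 < c₁ < c₂ < 1/2`, the series
`∑ₖ cos²θ_M⁽ᵏ⁾ ‖g⁽ᵏ⁾‖²_{M⁻¹}` converges, where
`cos θ_M⁽ᵏ⁾ = −(g⁽ᵏ⁾ᵀp⁽ᵏ⁾)/(‖g⁽ᵏ⁾‖_{M⁻¹}‖p⁽ᵏ⁾‖_M)`. -/
theorem pcg_modified_zoutendijk
    (n : ℕ) (hn : 1 ≤ n)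
    (E : (Fin n → ℝ) → ℝ) (gradE : (Fin n → ℝ) → (Fin n → ℝ))
    (hdiff : Differentiable ℝ E)
    (hgrad : ∀ x v, fderiv ℝ E x v = gradE x ⬝ᵥ v)
    (B : ℝ) (hbdd : ∀ x, B ≤ E x)
    (C : ℝ) (hC : 0 < C)
    (hLip : ∀ x y, ‖gradE y - gradE x‖ ≤ C * ‖y - x‖)
    (M : Matrix (Fin n) (Fin n) ℝ) (hM : M.PosDef)
    (f p : ℕ → (Fin n → ℝ)) (α : ℕ → ℝ)
    (c₁ c₂ : ℝ) (hc₁ : 0 < c₁) (hc₁₂ : c₁ < c₂) (hc₂ : c₂ < 1 / 2)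
    (hgne : ∀ k, gradE (f k) ≠ 0)
    (hα : ∀ k, 0 < α k)
    (hp0 : p 0 = -(M⁻¹.mulVec (gradE (f 0))))
    (hf : ∀ k, f (k + 1) = f k + α k • p k)
    (hpk : ∀ k, p (k + 1) =
      -(M⁻¹.mulVec (gradE (f (k + 1)))) +
        ((gradE (f (k + 1)) ⬝ᵥ M⁻¹.mulVec (gradE (f (k + 1)))) /
          (gradE (f k) ⬝ᵥ M⁻¹.mulVec (gradE (f k)))) • p k)
    (hWolfe1 : ∀ k, E (f k + α k • p k) ≤ E (f k) + c₁ * α k * (gradE (f k) ⬝ᵥ p k))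
    (hWolfe2 : ∀ k, |gradE (f k + α k • p k) ⬝ᵥ p k| ≤ c₂ * |gradE (f k) ⬝ᵥ p k|) :
    Summable (fun k : ℕ =>
      ((-(gradE (f k) ⬝ᵥ p k)) /
          (Real.sqrt (gradE (f k) ⬝ᵥ M⁻¹.mulVec (gradE (f k))) *
            Real.sqrt (p k ⬝ᵥ M.mulVec (p k)))) ^ 2 *
        (gradE (f k) ⬝ᵥ M⁻¹.mulVec (gradE (f k)))) :=
  pcg_modified_zoutendijk_general n E gradE B hbdd C hC hLip M hM f p α c₁ c₂ hc₁ hc₁₂ hc₂ hgne hα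
    hp0 hf hpk hWolfe1 hWolfe2
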